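/- Let S, Y_b, Y_f, X_f, X_b be discrete random variables such that Y_f ↔ X_b ↔ Y_b is a Markov chain. Then I(X_b; Y_b) ≥ I(Y_b, S; Y_f) − I(S; Y_f | Y_b) and hence I(X_b; Y_b) ≥ I(Y_b, S; Y_f) − H(S | Y_b). -/

import Mathlib

open Finset

structure FinProb (Ω : Type) [Fintype Ω] where
  p : Ω → ℝ
  nonneg : ∀ ω, 0 ≤ p ω
  sum_one : ∑ ω, p ω = 1

namespace FinProb

variable {Ω : Type} [Fintype Ω] (μ : FinProb Ω)

/-- P(X = x) -/
noncomputable def prob {α : Type} [DecidableEq α] (X : Ω → α) (x : α) : ℝ :=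
  ∑ ω, if X ω = x then μ.p ω else 0

/-- Shannon entropy (base 2) of a random variable. -/
noncomputable def H {α : Type} [Fintype α] [DecidableEq α] (X : Ω → α) : ℝ :=
  -∑ x, μ.prob X x * Real.logb 2 (μ.prob X x)

/-- Mutual information I(X;Y). -/
noncomputable def I {α β : Type} [Fintype α] [DecidableEq α] [Fintype β] [DecidableEq β]
    (X : Ω → α) (Y : Ω → β) : ℝ :=
  μ.H X + μ.H Y - μ.H (fun ω => (X ω, Y ω))

/-- Conditional entropy H(X|Z). -/
noncomputable def condH {α γ : Type} [Fintype α] [DecidableEq α] [Fintype γ] [DecidableEq γ]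
    (X : Ω → α) (Z : Ω → γ) : ℝ :=
  μ.H (fun ω => (X ω, Z ω)) - μ.H Z

/-- Conditional mutual information I(X;Y|Z). -/
noncomputable def condI {α β γ : Type} [Fintype α] [DecidableEq α] [Fintype β] [DecidableEq β]
    [Fintype γ] [DecidableEq γ] (X : Ω → α) (Y : Ω → β) (Z : Ω → γ) : ℝ :=
  μ.condH X Z + μ.condH Y Z - μ.condH (fun ω => (X ω, Y ω)) Z

/-- X and Y are conditionally independent given Z. -/
def CondIndep {α β γ : Type} [DecidableEq α] [DecidableEq β] [DecidableEq γ]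
    (X : Ω → α) (Y : Ω → β) (Z : Ω → γ) : Prop :=
  ∀ x y z, μ.prob (fun ω => (X ω, Y ω, Z ω)) (x, y, z) * μ.prob Z z
    = μ.prob (fun ω => (X ω, Z ω)) (x, z) * μ.prob (fun ω => (Y ω, Z ω)) (y, z)

/-- X and Y are independent. -/
def Indep {α β : Type} [DecidableEq α] [DecidableEq β] (X : Ω → α) (Y : Ω → β) : Prop :=
  ∀ x y, μ.prob (fun ω => (X ω, Y ω)) (x, y) = μ.prob X x * μ.prob Y y

end FinProb

/-- Binary entropy function (base 2). -/
noncomputable def binEnt (x : ℝ) : ℝ := -x * Real.logb 2 x - (1 - x) * Real.logb 2 (1 - x)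

/-! Writing `H X * log 2 = -∑ ω, p ω * log P_X (X ω)` turns every entropy identity into a
pointwise statement on `Ω`. The chain rule gives `I(Y_b,S; Y_f) - I(S; Y_f | Y_b) = I(Y_f; Y_b)`,
and `H(S | Y_b) - I(S; Y_f | Y_b) = H(S | Y_f, Y_b) ≥ 0`. For data processing, the Markov chain
makes `I(Y_f; Y_b | X_b)` vanish, while `I(X_b; Y_b | Y_f) ≥ 0` by Gibbs' inequality comparing the
joint law of `(X, Y, Z)` with `P(x,z) P(y,z) / P(z)`; both expand `I(Y_b; X_b, Y_f)`. -/

theorem Real.sum_mul_log_le_sum_mul_log_self {ι : Type} [Fintype ι] (p q : ι → ℝ)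
    (hp : ∀ i, 0 ≤ p i) (hq : ∀ i, 0 ≤ q i) (hpq : ∀ i, 0 < p i → 0 < q i)
    (hsum : ∑ i, q i ≤ ∑ i, p i) :
    ∑ i, p i * Real.log (q i) ≤ ∑ i, p i * Real.log (p i) := by
  have pointwise : ∀ i, p i * Real.log (q i) - p i * Real.log (p i) ≤ q i - p i := by
    intro i
    rcases (hp i).eq_or_lt with hpi | hpi
    · simp [← hpi, hq i]
    · have hqi := hpq i hpi
      calc p i * Real.log (q i) - p i * Real.log (p i) = p i * Real.log (q i / p i) := by
            rw [Real.log_div hqi.ne' hpi.ne']; ring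
        _ ≤ p i * (q i / p i - 1) :=
            mul_le_mul_of_nonneg_left (Real.log_le_sub_one_of_pos (div_pos hqi hpi)) hpi.le
        _ = q i - p i := by field_simp
  have := Finset.sum_le_sum fun i (_ : i ∈ Finset.univ) => pointwise i
  simp only [Finset.sum_sub_distrib] at this
  linarith

namespace FinProb

variable {Ω : Type} [Fintype Ω] (μ : FinProb Ω)
variable {α β γ : Type} [DecidableEq α] [DecidableEq β] [DecidableEq γ]

theorem prob_nonneg (X : Ω → α) (a : α) : 0 ≤ μ.prob X a :=
  Finset.sum_nonneg fun ω _ => by split_ifs <;> simp [μ.nonneg ω]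

theorem p_le_prob (X : Ω → α) (ω : Ω) : μ.p ω ≤ μ.prob X (X ω) := by
  have := Finset.single_le_sum (f := fun ω' => if X ω' = X ω then μ.p ω' else 0)
    (fun ω' _ => by split_ifs <;> simp [μ.nonneg ω']) (Finset.mem_univ ω)
  simpa [prob] using this

theorem prob_le_prob_comp (f : α → β) (X : Ω → α) (a : α) :
    μ.prob X a ≤ μ.prob (fun ω => f (X ω)) (f a) :=
  Finset.sum_le_sum fun ω _ => by
    by_cases h : X ω = a
    · simp [h]
    · simp only [if_neg h]; split_ifs <;> simp [μ.nonneg ω]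

theorem sum_prob_mul [Fintype α] (X : Ω → α) (g : α → ℝ) :
    ∑ a, μ.prob X a * g a = ∑ ω, μ.p ω * g (X ω) := by
  simp only [prob, Finset.sum_mul, ite_mul, zero_mul]
  rw [Finset.sum_comm]
  simp

theorem sum_prob [Fintype α] (X : Ω → α) : ∑ a, μ.prob X a = 1 := by
  simpa [μ.sum_one] using μ.sum_prob_mul X fun _ => 1

theorem sum_prob_pair_left [Fintype α] (X : Ω → α) (Z : Ω → γ) (z : γ) :
    ∑ x, μ.prob (fun ω => (X ω, Z ω)) (x, z) = μ.prob Z z := by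
  simp only [prob, Prod.ext_iff]
  rw [Finset.sum_comm]
  simp [ite_and]

omit [DecidableEq α] in
theorem sum_p_mul_le_sum_p_mul {f g : Ω → ℝ} (hfg : ∀ ω, 0 < μ.p ω → f ω ≤ g ω) :
    ∑ ω, μ.p ω * f ω ≤ ∑ ω, μ.p ω * g ω :=
  Finset.sum_le_sum fun ω _ => by
    rcases (μ.nonneg ω).eq_or_lt with h | h
    · simp [← h]
    · exact mul_le_mul_of_nonneg_left (hfg ω h) h.le

omit [DecidableEq α] in
theorem sum_p_mul_congr {f g : Ω → ℝ} (hfg : ∀ ω, 0 < μ.p ω → f ω = g ω) :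
    ∑ ω, μ.p ω * f ω = ∑ ω, μ.p ω * g ω :=
  (μ.sum_p_mul_le_sum_p_mul fun ω h => (hfg ω h).le).antisymm
    (μ.sum_p_mul_le_sum_p_mul fun ω h => (hfg ω h).ge)

variable [Fintype α] [Fintype β] [Fintype γ]

theorem H_mul_log_two (X : Ω → α) :
    μ.H X * Real.log 2 = -∑ ω, μ.p ω * Real.log (μ.prob X (X ω)) := by
  rw [H, ← μ.sum_prob_mul X fun a => Real.log (μ.prob X a), neg_mul, Finset.sum_mul]
  simp only [Real.logb, mul_assoc, div_mul_cancel₀ _ (Real.log_pos one_lt_two).ne']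

theorem H_comp_le (f : α → β) (X : Ω → α) : μ.H (fun ω => f (X ω)) ≤ μ.H X := by
  refine le_of_mul_le_mul_right ?_ (Real.log_pos one_lt_two)
  rw [H_mul_log_two, H_mul_log_two, neg_le_neg_iff]
  refine μ.sum_p_mul_le_sum_p_mul fun ω hω => Real.log_le_log ?_ (μ.prob_le_prob_comp f X _)
  exact hω.trans_le (μ.p_le_prob X ω)

theorem H_eq_of_comp_eq (X : Ω → α) (Y : Ω → β) (f : α → β) (g : β → α)
    (hY : ∀ ω, Y ω = f (X ω)) (hX : ∀ ω, X ω = g (Y ω)) : μ.H X = μ.H Y := by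
  obtain rfl : Y = fun ω => f (X ω) := funext hY
  refine le_antisymm ?_ (μ.H_comp_le f X)
  calc μ.H X = μ.H (fun ω => g (f (X ω))) := congrArg μ.H (funext hX)
    _ ≤ μ.H (fun ω => f (X ω)) := μ.H_comp_le g _

theorem H_pair_comm (X : Ω → α) (Y : Ω → β) :
    μ.H (fun ω => (X ω, Y ω)) = μ.H (fun ω => (Y ω, X ω)) :=
  μ.H_eq_of_comp_eq _ _ Prod.swap Prod.swap (fun _ => rfl) fun _ => rfl

theorem condI_mul_log_two (X : Ω → α) (Y : Ω → β) (Z : Ω → γ) :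
    μ.condI X Y Z * Real.log 2 = ∑ ω, μ.p ω *
      (Real.log (μ.prob (fun ω => (X ω, Y ω, Z ω)) (X ω, Y ω, Z ω)) + Real.log (μ.prob Z (Z ω))
        - Real.log (μ.prob (fun ω => (X ω, Z ω)) (X ω, Z ω))
        - Real.log (μ.prob (fun ω => (Y ω, Z ω)) (Y ω, Z ω))) := by
  have hassoc : μ.H (fun ω => ((X ω, Y ω), Z ω)) = μ.H (fun ω => (X ω, Y ω, Z ω)) :=
    μ.H_eq_of_comp_eq _ _ (Equiv.prodAssoc α β γ) (Equiv.prodAssoc α β γ).symm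
      (fun _ => rfl) fun _ => rfl
  simp only [condI, condH, hassoc, add_mul, sub_mul, H_mul_log_two, mul_add, mul_sub,
    Finset.sum_add_distrib, Finset.sum_sub_distrib]
  ring

theorem condI_nonneg (X : Ω → α) (Y : Ω → β) (Z : Ω → γ) : 0 ≤ μ.condI X Y Z := by
  set P := μ.prob (fun ω => (X ω, Y ω, Z ω))
  set Q : α × β × γ → ℝ := fun t =>
    μ.prob (fun ω => (X ω, Z ω)) (t.1, t.2.2) * μ.prob (fun ω => (Y ω, Z ω)) (t.2.1, t.2.2)
      / μ.prob Z t.2.2 with hQ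
  have P_le_XZ (t : α × β × γ) : P t ≤ μ.prob (fun ω => (X ω, Z ω)) (t.1, t.2.2) :=
    μ.prob_le_prob_comp (fun t => (t.1, t.2.2)) _ t
  have P_le_YZ (t : α × β × γ) : P t ≤ μ.prob (fun ω => (Y ω, Z ω)) (t.2.1, t.2.2) :=
    μ.prob_le_prob_comp (fun t => (t.2.1, t.2.2)) _ t
  have P_le_Z (t : α × β × γ) : P t ≤ μ.prob Z t.2.2 :=
    μ.prob_le_prob_comp (fun t => t.2.2) _ t
  have sum_Q : ∑ t, Q t = 1 := by
    calc ∑ t, Q t = ∑ z : γ, (∑ x : α, μ.prob (fun ω => (X ω, Z ω)) (x, z))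
          * (∑ y : β, μ.prob (fun ω => (Y ω, Z ω)) (y, z)) / μ.prob Z z := by
          simp only [hQ, Fintype.sum_prod_type, Finset.sum_mul_sum, Finset.sum_div]
          exact (Finset.sum_congr rfl fun _ _ => Finset.sum_comm).trans Finset.sum_comm
      _ = 1 := by simp only [sum_prob_pair_left, mul_self_div_self, sum_prob]
  have gibbs := Real.sum_mul_log_le_sum_mul_log_self P Q (μ.prob_nonneg _)
    (fun _ => div_nonneg (mul_nonneg (μ.prob_nonneg _ _) (μ.prob_nonneg _ _)) (μ.prob_nonneg _ _))
    (fun t ht => div_pos (mul_pos (ht.trans_le (P_le_XZ t)) (ht.trans_le (P_le_YZ t)))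
      (ht.trans_le (P_le_Z t)))
    (by rw [sum_Q, μ.sum_prob])
  rw [μ.sum_prob_mul _ fun t => Real.log (Q t), μ.sum_prob_mul _ fun t => Real.log (P t)] at gibbs
  have log_Q : ∑ ω, μ.p ω * Real.log (Q (X ω, Y ω, Z ω)) = ∑ ω, μ.p ω *
      (Real.log (μ.prob (fun ω => (X ω, Z ω)) (X ω, Z ω))
        + Real.log (μ.prob (fun ω => (Y ω, Z ω)) (Y ω, Z ω)) - Real.log (μ.prob Z (Z ω))) := by
    refine μ.sum_p_mul_congr fun ω hω => ?_
    have hXZ := hω.trans_le (μ.p_le_prob (fun ω => (X ω, Z ω)) ω)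
    have hYZ := hω.trans_le (μ.p_le_prob (fun ω => (Y ω, Z ω)) ω)
    have hZ := hω.trans_le (μ.p_le_prob Z ω)
    rw [hQ, Real.log_div (mul_pos hXZ hYZ).ne' hZ.ne', Real.log_mul hXZ.ne' hYZ.ne']
  refine nonneg_of_mul_nonneg_left ?_ (Real.log_pos one_lt_two)
  rw [log_Q] at gibbs
  rw [condI_mul_log_two]
  simp only [mul_add, mul_sub, Finset.sum_add_distrib, Finset.sum_sub_distrib] at gibbs ⊢
  linarith

theorem condI_eq_zero_of_condIndep {X : Ω → α} {Y : Ω → β} {Z : Ω → γ}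
    (h : μ.CondIndep X Y Z) : μ.condI X Y Z = 0 := by
  have h_log : μ.condI X Y Z * Real.log 2 = 0 := by
    rw [condI_mul_log_two]
    refine (μ.sum_p_mul_congr (g := 0) fun ω hω => ?_).trans (by simp)
    have hXYZ := hω.trans_le (μ.p_le_prob (fun ω => (X ω, Y ω, Z ω)) ω)
    have hXZ := hω.trans_le (μ.p_le_prob (fun ω => (X ω, Z ω)) ω)
    have hYZ := hω.trans_le (μ.p_le_prob (fun ω => (Y ω, Z ω)) ω)
    have hZ := hω.trans_le (μ.p_le_prob Z ω)
    rw [← Real.log_mul hXYZ.ne' hZ.ne', h, Real.log_mul hXZ.ne' hYZ.ne', Pi.zero_apply]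
    ring
  exact (mul_eq_zero.1 h_log).resolve_right (Real.log_pos one_lt_two).ne'

theorem I_le_I_of_condIndep {X : Ω → α} {Y : Ω → β} {Z : Ω → γ} (h : μ.CondIndep X Y Z) :
    μ.I X Y ≤ μ.I Z Y := by
  have h_markov := μ.condI_eq_zero_of_condIndep h
  have h_nonneg := μ.condI_nonneg Z Y X
  have h_perm : μ.H (fun ω => ((X ω, Y ω), Z ω)) = μ.H (fun ω => ((Z ω, Y ω), X ω)) :=
    μ.H_eq_of_comp_eq _ _ (fun t => ((t.2, t.1.2), t.1.1)) (fun t => ((t.2, t.1.2), t.1.1))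
      (fun _ => rfl) fun _ => rfl
  simp only [I, condI, condH] at h_markov h_nonneg ⊢
  linarith [μ.H_pair_comm X Z, μ.H_pair_comm X Y, μ.H_pair_comm Y Z]

theorem I_pair_sub_condI (S : Ω → α) (X : Ω → β) (Y : Ω → γ) :
    μ.I (fun ω => (Y ω, S ω)) X - μ.condI S X Y = μ.I X Y := by
  have h_perm : μ.H (fun ω => ((Y ω, S ω), X ω)) = μ.H (fun ω => ((S ω, X ω), Y ω)) :=
    μ.H_eq_of_comp_eq _ _ (fun t => ((t.1.2, t.2), t.1.1)) (fun t => ((t.2, t.1.1), t.1.2))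
      (fun _ => rfl) fun _ => rfl
  simp only [I, condI, condH]
  linarith [μ.H_pair_comm Y S]

theorem condI_le_condH (X : Ω → α) (Y : Ω → β) (Z : Ω → γ) :
    μ.condI X Y Z ≤ μ.condH X Z := by
  have := μ.H_comp_le (fun t : (α × β) × γ => (t.1.2, t.2)) fun ω => ((X ω, Y ω), Z ω)
  simp only [condI, condH]
  linarith

end FinProb

theorem stmt19 {Ω S Yb Yf Xb : Type} [Fintype Ω]
    [Fintype S] [DecidableEq S] [Fintype Yb] [DecidableEq Yb]
    [Fintype Yf] [DecidableEq Yf] [Fintype Xb] [DecidableEq Xb]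
    (μ : FinProb Ω) (s : Ω → S) (yb : Ω → Yb) (yf : Ω → Yf) (xb : Ω → Xb)
    (h : μ.CondIndep yf yb xb) :
    μ.I (fun ω => (yb ω, s ω)) yf - μ.condI s yf yb ≤ μ.I xb yb ∧
      μ.I (fun ω => (yb ω, s ω)) yf - μ.condH s yb ≤ μ.I xb yb := by
  have data_processing := μ.I_le_I_of_condIndep h
  have chain_rule := μ.I_pair_sub_condI s yf yb
  have condI_le := μ.condI_le_condH s yf yb
  exact ⟨by linarith, by linarith⟩
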